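/- For the Gaussian envelope f(t) = exp(−(t/T)²), the maximizer of ω ↦ ω·exp(−T²(ω − ω_A)²/4) over ω > 0 is exactly ω_E = (ω_A + sqrt(ω_A² + 8/T²))/2, and hence ω_E/ω_A = (1 + sqrt(1 + 4(πN)^{−2}))/2 with N = ω_A T/(π√2). -/

import Mathlib

open Real Set

/-- Since `k ω₀ (ω₀ - c) = 2` makes `ω₀` a critical point of the log of the function, the tangent
bound `1 + x ≤ exp x` at `x = k((ω - c)² - (ω₀ - c)²)/4` leaves exactly the strict surplus
`k ω₀ (ω - ω₀)² / 4`. -/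
theorem mul_exp_neg_sq_lt_of_critical {k c ω₀ ω : ℝ} (hk : 0 < k) (hω₀ : 0 < ω₀)
    (hcrit : k * ω₀ * (ω₀ - c) = 2) (hne : ω ≠ ω₀) :
    ω * exp (-(k * (ω - c) ^ 2 / 4)) < ω₀ * exp (-(k * (ω₀ - c) ^ 2 / 4)) := by
  set x := k * ((ω - c) ^ 2 - (ω₀ - c) ^ 2) / 4 with hx
  have hsurplus : ω₀ * (1 + x) - ω = k * ω₀ * (ω - ω₀) ^ 2 / 4 := by
    linear_combination (ω - ω₀) / 2 * hcrit
  have hpos : 0 < k * ω₀ * (ω - ω₀) ^ 2 / 4 := by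
    have := sub_ne_zero.mpr hne
    positivity
  have hlt : ω < ω₀ * exp x := by
    nlinarith [mul_le_mul_of_nonneg_left (add_one_le_exp x) hω₀.le]
  calc ω * exp (-(k * (ω - c) ^ 2 / 4))
      < ω₀ * exp x * exp (-(k * (ω - c) ^ 2 / 4)) := by gcongr
    _ = ω₀ * exp (-(k * (ω₀ - c) ^ 2 / 4)) := by
      rw [mul_assoc, ← exp_add, hx]
      congr 2
      ring

theorem four_mul_mul_sub_eq_of_eq_add_sqrt {b d x : ℝ} (hd : 0 ≤ b ^ 2 + d)
    (hx : x = (b + √(b ^ 2 + d)) / 2) : 4 * x * (x - b) = d := by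
  subst hx
  linear_combination sq_sqrt hd

theorem add_sqrt_sq_add_div_self {b d : ℝ} (hb : 0 < b) (hd : 0 ≤ b ^ 2 + d) :
    (b + √(b ^ 2 + d)) / 2 / b = (1 + √(1 + d / b ^ 2)) / 2 := by
  have hsplit : 1 + d / b ^ 2 = (b ^ 2 + d) / b ^ 2 := by field_simp
  rw [hsplit, sqrt_div hd, sqrt_sq hb.le]
  field_simp

/-- For the Gaussian envelope, the maximizer of `ω ↦ ω·exp(−T²(ω − ω_A)²/4)` over `ω > 0`
is exactly `ω_E = (ω_A + √(ω_A² + 8/T²))/2`, and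
`ω_E/ω_A = (1 + √(1 + 4(πN)⁻²))/2` with `N = ω_A T/(π√2)`. -/
theorem gaussian_central_frequency_maximizer
    (T ωA : ℝ) (hT : 0 < T) (hωA : 0 < ωA)
    (F : ℝ → ℝ) (hF : ∀ ω, F ω = ω * Real.exp (-(T ^ 2 * (ω - ωA) ^ 2 / 4)))
    (ωE N : ℝ)
    (hωE : ωE = (ωA + Real.sqrt (ωA ^ 2 + 8 / T ^ 2)) / 2)
    (hN : N = ωA * T / (Real.pi * Real.sqrt 2)) :
    (∀ ω ∈ Ioi (0 : ℝ), ω ≠ ωE → F ω < F ωE) ∧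
    ωE / ωA = (1 + Real.sqrt (1 + 4 / (Real.pi * N) ^ 2)) / 2 := by
  have hdisc : 0 ≤ ωA ^ 2 + 8 / T ^ 2 := by positivity
  have hωE_pos : 0 < ωE := by rw [hωE]; positivity
  have hcrit : T ^ 2 * ωE * (ωE - ωA) = 2 := by
    have := four_mul_mul_sub_eq_of_eq_add_sqrt hdisc hωE
    field_simp at this
    linarith
  have hπN : 4 / (π * N) ^ 2 = 8 / T ^ 2 / ωA ^ 2 := by
    rw [hN]
    field_simp
    rw [sq_sqrt zero_le_two]
    ring
  refine ⟨fun ω _ hne => ?_, ?_⟩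
  · rw [hF, hF]
    exact mul_exp_neg_sq_lt_of_critical (by positivity) hωE_pos hcrit hne
  · rw [hπN, hωE, add_sqrt_sq_add_div_self hωA hdisc]
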